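/- arXiv:1610.07888 — 5 statements merged into one kernel-verified Lean document; each statement's English description precedes it below -/
import Mathlib

section
/- Let G be a finite digraph without loops and multiple arcs having at least one arc, with signless Laplacian Q(G) = D(G) + A(G), where D(G) is the diagonal matrix of outdegrees. Then the spectral radius q(G) of Q(G) satisfies q(G) ≤ max over arcs (v_i, v_j) ∈ E(G) of (d_i^+ + d_j^+). -/
open Matrix Finset

/-- Spectral radius of a complex square matrix: the largest modulus of its eigenvalues. -/
noncomputable def specRad {n : ℕ} (M : Matrix (Fin n) (Fin n) ℂ) : ℝ :=
  sSup {x : ℝ | ∃ μ ∈ spectrum ℂ M, x = ‖μ‖}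

/-- Spectral radius of a real square matrix (via its complex eigenvalues). -/
noncomputable def specRadR {n : ℕ} (M : Matrix (Fin n) (Fin n) ℝ) : ℝ :=
  specRad (M.map Complex.ofReal)

/-- Adjacency matrix of a digraph given by its arc relation. -/
def adjM {n : ℕ} (E : Fin n → Fin n → Prop) [DecidableRel E] :
    Matrix (Fin n) (Fin n) ℝ := fun i j => if E i j then 1 else 0

/-- Outdegree of vertex `i`. -/
def outdeg {n : ℕ} (E : Fin n → Fin n → Prop) [DecidableRel E] (i : Fin n) : ℕ :=
  (Finset.univ.filter (fun j => E i j)).card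

/-- Signless Laplacian `Q(G) = D(G) + A(G)`. -/
noncomputable def Qmat {n : ℕ} (E : Fin n → Fin n → Prop) [DecidableRel E] :
    Matrix (Fin n) (Fin n) ℝ :=
  Matrix.diagonal (fun i => (outdeg E i : ℝ)) + adjM E

/-- Signless Laplacian spectral radius `q(G)`. -/
noncomputable def qG {n : ℕ} (E : Fin n → Fin n → Prop) [DecidableRel E] : ℝ :=
  specRadR (Qmat E)

/-- Average 2-outdegree `m_i^+`. -/
noncomputable def m2 {n : ℕ} (E : Fin n → Fin n → Prop) [DecidableRel E] (i : Fin n) : ℝ :=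
  (∑ j ∈ Finset.univ.filter (fun j => E i j), (outdeg E j : ℝ)) / (outdeg E i : ℝ)

/-- The finset of arcs of the digraph. -/
def arcs {n : ℕ} (E : Fin n → Fin n → Prop) [DecidableRel E] : Finset (Fin n × Fin n) :=
  Finset.univ.filter (fun p => E p.1 p.2)

/-- Strong connectivity of a digraph. -/
def StrongConn {n : ℕ} (E : Fin n → Fin n → Prop) : Prop :=
  ∀ i j : Fin n, Relation.ReflTransGen E i j

/-- Irreducibility of a square matrix: the digraph of nonzero entries is strongly connected. -/
def MatIrred {n : ℕ} {α : Type*} [Zero α] (M : Matrix (Fin n) (Fin n) α) : Prop :=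
  ∀ i j : Fin n, i ≠ j → Relation.TransGen (fun a b => M a b ≠ 0) i j

/-! The outdegrees form a positive weight vector `d`. For an eigenvalue `μ` of `Q` with eigenvector
`v`, take `i` maximising `‖v i‖ / d i`; row `i` of `Q v = μ v` then gives
`‖μ‖ d_i ≤ (Q d)_i = d_i² + ∑_{i → k} d_k ≤ d_i (d_i + d_j)`, where `j` is an out-neighbour of `i`
of largest outdegree. -/

theorem Matrix.exists_norm_mul_le_weighted_row_sum {K ι : Type*} [NormedField K] [Fintype ι]
    [DecidableEq ι] {A : Matrix ι ι K} {μ : K} (hμ : μ ∈ spectrum K A) {w : ι → ℝ}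
    (hw : ∀ i, 0 < w i) : ∃ i, ‖μ‖ * w i ≤ ∑ j, ‖A i j‖ * w j := by
  rw [← Matrix.spectrum_toLin', ← Module.End.hasEigenvalue_iff_mem_spectrum] at hμ
  obtain ⟨v, hv⟩ := hμ.exists_hasEigenvector
  have hAv : A *ᵥ v = μ • v := by simpa [Matrix.toLin'_apply] using hv.apply_eq_smul
  obtain ⟨k, hk⟩ := Function.ne_iff.1 hv.2
  set r : ι → ℝ := fun j => ‖v j‖ / w j
  obtain ⟨i, -, hi⟩ := Finset.exists_max_image Finset.univ r ⟨k, Finset.mem_univ k⟩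
  have hv_le (j : ι) : ‖v j‖ ≤ r i * w j := by
    simpa [r, div_le_iff₀ (hw j)] using hi j (Finset.mem_univ j)
  have hri : 0 < r i := (div_pos (norm_pos_iff.2 hk) (hw k)).trans_le (hi k (Finset.mem_univ k))
  have hvi : ‖v i‖ = r i * w i := by simp [r, div_mul_cancel₀ _ (hw i).ne']
  refine ⟨i, le_of_mul_le_mul_right ?_ hri⟩
  calc ‖μ‖ * w i * r i = ‖(A *ᵥ v) i‖ := by
        rw [hAv, Pi.smul_apply, smul_eq_mul, norm_mul, hvi]; ring
    _ ≤ ∑ j, ‖A i j‖ * ‖v j‖ := by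
        simpa only [Matrix.mulVec, dotProduct, norm_mul] using
          norm_sum_le Finset.univ fun j => A i j * v j
    _ ≤ ∑ j, ‖A i j‖ * (r i * w j) := by gcongr with j; exact hv_le j
    _ = (∑ j, ‖A i j‖ * w j) * r i := by rw [Finset.sum_mul]; congr! 1 with j; ring

theorem specRad_le {n : ℕ} {M : Matrix (Fin n) (Fin n) ℂ} {c : ℝ} (hc : 0 ≤ c)
    (h : ∀ μ ∈ spectrum ℂ M, ‖μ‖ ≤ c) : specRad M ≤ c :=
  Real.sSup_le (by rintro x ⟨μ, hμ, rfl⟩; exact h μ hμ) hc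

theorem outdeg_pos_of_strongConn {n : ℕ} {E : Fin n → Fin n → Prop} [DecidableRel E]
    (hsc : StrongConn E) {a b : Fin n} (hab : E a b) (i : Fin n) : 0 < outdeg E i := by
  obtain ⟨j, hij⟩ : ∃ j, E i j := by
    by_cases hia : i = a
    · exact ⟨b, hia ▸ hab⟩
    · obtain rfl | ⟨j, hij, -⟩ := (hsc i a).cases_head
      · exact absurd rfl hia
      · exact ⟨j, hij⟩
  exact Finset.card_pos.2 ⟨j, by simpa using hij⟩

theorem exists_sum_outdeg_le_mul_outdeg {n : ℕ} {E : Fin n → Fin n → Prop} [DecidableRel E]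
    {i : Fin n} (hi : 0 < outdeg E i) :
    ∃ j, E i j ∧ ∑ k ∈ univ.filter (E i), outdeg E k ≤ outdeg E i * outdeg E j := by
  obtain ⟨j, hj, hmax⟩ := Finset.exists_max_image _ (outdeg E) (Finset.card_pos.1 hi)
  refine ⟨j, by simpa using hj, ?_⟩
  exact (Finset.sum_le_card_nsmul _ _ _ hmax).trans_eq (smul_eq_mul _ _)

theorem Qmat_nonneg {n : ℕ} (E : Fin n → Fin n → Prop) [DecidableRel E] (i j : Fin n) :
    0 ≤ Qmat E i j := by
  simp only [Qmat, adjM, Matrix.add_apply, Matrix.diagonal_apply]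
  split_ifs <;> positivity

theorem sum_Qmat_mul_outdeg {n : ℕ} (E : Fin n → Fin n → Prop) [DecidableRel E] (i : Fin n) :
    ∑ j, Qmat E i j * outdeg E j
      = (outdeg E i : ℝ) * outdeg E i + ∑ j ∈ univ.filter (E i), (outdeg E j : ℝ) := by
  simp [Qmat, adjM, Matrix.add_apply, add_mul, Finset.sum_add_distrib, Matrix.diagonal_apply,
    Finset.sum_filter]

theorem stmt_2_general {n : ℕ} (E : Fin n → Fin n → Prop) [DecidableRel E]
    (hsc : StrongConn E) (harcs : (arcs E).Nonempty) :
    qG E ≤ (arcs E).sup' harcs (fun p => (outdeg E p.1 : ℝ) + (outdeg E p.2 : ℝ)) := by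
  set bound := fun p : Fin n × Fin n => (outdeg E p.1 : ℝ) + outdeg E p.2
  have le_bound {i j : Fin n} (hij : E i j) : bound (i, j) ≤ (arcs E).sup' harcs bound :=
    le_sup' bound (mem_filter.2 ⟨mem_univ _, hij⟩)
  obtain ⟨⟨a, b⟩, hab⟩ := harcs
  have hdeg := outdeg_pos_of_strongConn hsc (mem_filter.1 hab).2
  refine specRad_le ((by positivity : 0 ≤ bound (a, b)).trans (le_bound (mem_filter.1 hab).2)) ?_
  intro μ hμ
  obtain ⟨i, hi⟩ := Matrix.exists_norm_mul_le_weighted_row_sum hμ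
    (w := fun i => (outdeg E i : ℝ)) (fun i => Nat.cast_pos.2 (hdeg i))
  obtain ⟨j, hij, hsum⟩ := exists_sum_outdeg_le_mul_outdeg (hdeg i)
  have hsum : ∑ k ∈ univ.filter (E i), (outdeg E k : ℝ) ≤ outdeg E i * outdeg E j := by
    exact_mod_cast hsum
  have hμi : ‖μ‖ * outdeg E i ≤ bound (i, j) * outdeg E i :=
    calc ‖μ‖ * outdeg E i ≤ ∑ k, Qmat E i k * outdeg E k := by
          simpa [Real.norm_of_nonneg (Qmat_nonneg E _ _)] using hi
      _ ≤ bound (i, j) * outdeg E i := by rw [sum_Qmat_mul_outdeg]; linarith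
  exact (le_of_mul_le_mul_right hμi (Nat.cast_pos.2 (hdeg i))).trans (le_bound hij)

/-- `q(G) ≤ max{d_i⁺ + d_j⁺ : (v_i, v_j) ∈ E(G)}`. -/
theorem stmt_2 {n : ℕ} (E : Fin n → Fin n → Prop) [DecidableRel E]
    (hloop : ∀ i, ¬ E i i) (hsc : StrongConn E) (harcs : (arcs E).Nonempty) :
    qG E ≤ (arcs E).sup' harcs (fun p => (outdeg E p.1 : ℝ) + (outdeg E p.2 : ℝ)) :=
  stmt_2_general E hsc harcs
end

section
/- Let A be an irreducible n×n complex matrix with n ≥ 2, let r_i = Σ_{j≠i} |a_{ij}|, and for i ≠ j let S_{ij} = { z ∈ ℂ : |z − a_{ii}|·|z − a_{jj}| ≤ r_i r_j }. Then every eigenvalue of A lies in the union of the regions S_{ij} taken over all pairs (i,j) with i ≠ j and a_{ij} ≠ 0. -/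
open Matrix Finset

/-!
Take an eigenvector `x` for `μ`, let `i` maximise `|x_i|` and let `j` maximise `|x_k|` over the
out-neighbours `k ≠ i` of `i`, which exist by irreducibility. Rows `i` and `j` of `A x = μ x` give
`|μ - a_ii| |x_i| ≤ r_i |x_j|` and `|μ - a_jj| |x_j| ≤ r_j |x_i|`; multiplying them and cancelling
`|x_i| > 0` yields `μ ∈ S_ij` with `a_ij ≠ 0`.
-/

theorem Relation.TransGen.exists_ne_rel {α : Type*} {r : α → α → Prop} {a b : α}
    (h : Relation.TransGen r a b) (hab : a ≠ b) : ∃ c, c ≠ a ∧ r a c := by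
  induction h using Relation.TransGen.head_induction_on with
  | single hab' => exact ⟨b, hab.symm, hab'⟩
  | @head a c hac _ ih =>
    by_cases hca : c = a
    · exact hca ▸ ih (hca ▸ hab)
    · exact ⟨c, hca, hac⟩

theorem MatIrred.exists_ne_ne_zero {n : ℕ} {α : Type*} [Zero α] [Nontrivial (Fin n)]
    {M : Matrix (Fin n) (Fin n) α} (hM : MatIrred M) (i : Fin n) : ∃ j, j ≠ i ∧ M i j ≠ 0 := by
  obtain ⟨i', hi'⟩ := exists_ne i
  exact (hM i i' hi'.symm).exists_ne_rel hi'.symm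

theorem Matrix.exists_mulVec_eq_smul_of_mem_spectrum {ι K : Type*} [Fintype ι] [DecidableEq ι]
    [Field K] {A : Matrix ι ι K} {μ : K} (hμ : μ ∈ spectrum K A) :
    ∃ x ≠ 0, A *ᵥ x = μ • x := by
  rw [← Matrix.spectrum_toLin', ← Module.End.hasEigenvalue_iff_mem_spectrum] at hμ
  obtain ⟨x, hx⟩ := hμ.exists_hasEigenvector
  exact ⟨x, hx.2, by rw [← Matrix.toLin'_apply, hx.apply_eq_smul]⟩

theorem Matrix.norm_sub_diag_mul_le_of_mulVec_eq_smul {ι 𝕜 : Type*} [Fintype ι] [DecidableEq ι]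
    [NormedField 𝕜] {A : Matrix ι ι 𝕜} {x : ι → 𝕜} {μ : 𝕜} (hx : A *ᵥ x = μ • x) (l : ι)
    {m : ℝ} (hm : ∀ k ≠ l, A l k ≠ 0 → ‖x k‖ ≤ m) :
    ‖μ - A l l‖ * ‖x l‖ ≤ (∑ k ∈ univ.erase l, ‖A l k‖) * m := by
  have hrow : (μ - A l l) * x l = ∑ k ∈ univ.erase l, A l k * x k := by
    have : ∑ k, A l k * x k = μ * x l := by simpa [mulVec, dotProduct] using congrFun hx l
    rw [sum_erase_eq_sub (mem_univ l), this, sub_mul]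
  calc ‖μ - A l l‖ * ‖x l‖ = ‖∑ k ∈ univ.erase l, A l k * x k‖ := by rw [← hrow, norm_mul]
    _ ≤ ∑ k ∈ univ.erase l, ‖A l k‖ * ‖x k‖ :=
        norm_sum_le_of_le _ fun k _ => (norm_mul _ _).le
    _ ≤ ∑ k ∈ univ.erase l, ‖A l k‖ * m := by
        refine sum_le_sum fun k hk => ?_
        by_cases hAk : A l k = 0
        · simp [hAk]
        · exact mul_le_mul_of_nonneg_left (hm k (ne_of_mem_erase hk) hAk) (norm_nonneg _)
    _ = (∑ k ∈ univ.erase l, ‖A l k‖) * m := (sum_mul ..).symm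

theorem mul_le_mul_of_cross_le {a b r s p q : ℝ} (hb : 0 ≤ b) (hr : 0 ≤ r) (hp : 0 < p)
    (hap : a * p ≤ r * q) (hbq : b * q ≤ s * p) : a * b ≤ r * s := by
  refine le_of_mul_le_mul_right ?_ hp
  calc a * b * p = b * (a * p) := by ring
    _ ≤ b * (r * q) := mul_le_mul_of_nonneg_left hap hb
    _ = r * (b * q) := by ring
    _ ≤ r * (s * p) := mul_le_mul_of_nonneg_left hbq hr
    _ = r * s * p := by ring

/-- every eigenvalue of an irreducible complex matrix lies in the union of the
Brauer ovals `S_{ij}` taken over pairs `i ≠ j` with `a_{ij} ≠ 0`. -/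
theorem stmt_6 {n : ℕ} (hn : 2 ≤ n) (A : Matrix (Fin n) (Fin n) ℂ)
    (hirr : MatIrred A) (μ : ℂ) (hμ : μ ∈ spectrum ℂ A) :
    ∃ i j : Fin n, i ≠ j ∧ A i j ≠ 0 ∧
      ‖μ - A i i‖ * ‖μ - A j j‖ ≤
        (∑ k ∈ Finset.univ.erase i, ‖A i k‖) *
        (∑ k ∈ Finset.univ.erase j, ‖A j k‖) := by
  have : Nontrivial (Fin n) := Fin.nontrivial_iff_two_le.mpr hn
  obtain ⟨x, hx0, hx⟩ := exists_mulVec_eq_smul_of_mem_spectrum hμ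
  obtain ⟨i, -, hi⟩ := exists_max_image univ (fun k => ‖x k‖) univ_nonempty
  have hxi : 0 < ‖x i‖ := by
    obtain ⟨k, hk⟩ := Function.ne_iff.mp hx0
    exact (norm_pos_iff.mpr hk).trans_le (hi k (mem_univ k))
  set N := {k ∈ univ.erase i | A i k ≠ 0}
  have hN : N.Nonempty := by
    obtain ⟨k, hki, hAk⟩ := hirr.exists_ne_ne_zero i
    exact ⟨k, by simp [N, hki, hAk]⟩
  obtain ⟨j, hjN, hj⟩ := exists_max_image N (fun k => ‖x k‖) hN
  obtain ⟨hji, hAij⟩ := mem_filter.mp hjN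
  refine ⟨i, j, (ne_of_mem_erase hji).symm, hAij,
    mul_le_mul_of_cross_le (q := ‖x j‖) (norm_nonneg _) (sum_nonneg fun _ _ => norm_nonneg _) hxi
      ?_ ?_⟩
  · exact norm_sub_diag_mul_le_of_mulVec_eq_smul hx i fun k hki hAk =>
      hj k (mem_filter.mpr ⟨mem_erase.mpr ⟨hki, mem_univ k⟩, hAk⟩)
  · exact norm_sub_diag_mul_le_of_mulVec_eq_smul hx j fun k _ _ => hi k (mem_univ k)
end

section
/- Let G be a digraph with at least one arc in which every vertex has positive outdegree. Then q(G) ≤ max over arcs (v_i,v_j) of ( d_i^+·sqrt(d_i^+ + m_i^+) + d_j^+·sqrt(d_j^+ + m_j^+) ) / sqrt(d_i^+ + d_j^+). -/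
open Matrix Finset

/-! The bound is a Collatz–Wielandt estimate for the nonnegative matrix `Q`: a positive vector
`w` with `Q w ≤ b w` forces every eigenvalue to have modulus at most `b`. Take
`w i = ∑_{i → k} √(d⁺ i + d⁺ k)`. Then `(Q w) i = ∑_{i → j} (w i + w j)`, and by Cauchy–Schwarz
`w i ≤ d⁺ i √(d⁺ i + m⁺ i)`, so each arc term is at most the arc's bound times `√(d⁺ i + d⁺ j)`;
summing over the out-arcs of `i` gives back `b * w i`. -/

namespace Matrix

variable {ι : Type*} [Fintype ι]

theorem exists_mulVec_eq_smul_of_mem_spectrum_s11 [DecidableEq ι] {K : Type*} [Field K]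
    {M : Matrix ι ι K} {μ : K} (hμ : μ ∈ spectrum K M) : ∃ v ≠ 0, M *ᵥ v = μ • v := by
  rw [spectrum.mem_iff, isUnit_iff_isUnit_det, isUnit_iff_ne_zero, not_not,
    ← exists_mulVec_eq_zero_iff] at hμ
  obtain ⟨v, hv, hμv⟩ := hμ
  refine ⟨v, hv, ?_⟩
  rw [sub_mulVec, sub_eq_zero, Algebra.algebraMap_eq_smul_one, smul_mulVec, one_mulVec] at hμv
  exact hμv.symm

theorem norm_map_ofReal_mulVec_apply_le {A : Matrix ι ι ℝ} (hA : ∀ i j, 0 ≤ A i j)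
    (v : ι → ℂ) (i : ι) : ‖(A.map Complex.ofReal *ᵥ v) i‖ ≤ (A *ᵥ fun j => ‖v j‖) i := by
  simp only [mulVec, dotProduct]
  refine (norm_sum_le _ _).trans (Finset.sum_le_sum fun j _ => ?_)
  rw [map_apply, norm_mul, Complex.norm_real, Real.norm_of_nonneg (hA i j)]

theorem norm_le_of_mulVec_le_smul [DecidableEq ι] {A : Matrix ι ι ℝ} {w : ι → ℝ} {b : ℝ}
    (hA : ∀ i j, 0 ≤ A i j) (hw : ∀ i, 0 < w i) (hAw : ∀ i, (A *ᵥ w) i ≤ b * w i)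
    {μ : ℂ} (hμ : μ ∈ spectrum ℂ (A.map Complex.ofReal)) : ‖μ‖ ≤ b := by
  obtain ⟨v, hv, hμv⟩ := exists_mulVec_eq_smul_of_mem_spectrum_s11 hμ
  obtain ⟨j, hj⟩ := Function.ne_iff.mp hv
  -- Compare `|v|` with `w` at a coordinate where the ratio `|v i| / w i` is largest.
  obtain ⟨i, -, hi⟩ := Finset.exists_max_image Finset.univ (fun i => ‖v i‖ / w i) ⟨j, mem_univ j⟩
  set r := ‖v i‖ / w i
  have hvr : ∀ k, ‖v k‖ ≤ r * w k := fun k =>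
    (div_le_iff₀ (hw k)).mp (hi k (mem_univ k))
  have hvi : ‖v i‖ = r * w i := (div_mul_cancel₀ _ (hw i).ne').symm
  have hr : 0 < r := by
    have := hvr j
    have := norm_pos_iff.mpr hj
    nlinarith [hw j]
  have key : ‖μ‖ * ‖v i‖ ≤ b * ‖v i‖ :=
    calc ‖μ‖ * ‖v i‖ = ‖(A.map Complex.ofReal *ᵥ v) i‖ := by simp [hμv]
      _ ≤ (A *ᵥ fun k => ‖v k‖) i := norm_map_ofReal_mulVec_apply_le hA v i
      _ ≤ (A *ᵥ (r • w)) i :=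
        Finset.sum_le_sum fun k _ => mul_le_mul_of_nonneg_left (hvr k) (hA i k)
      _ = r * (A *ᵥ w) i := by rw [mulVec_smul, Pi.smul_apply, smul_eq_mul]
      _ ≤ r * (b * w i) := mul_le_mul_of_nonneg_left (hAw i) hr.le
      _ = b * ‖v i‖ := by rw [hvi]; ring
  exact le_of_mul_le_mul_right key (hvi ▸ mul_pos hr (hw i))

end Matrix

theorem specRadR_le_of_mulVec_le_smul {n : ℕ} {A : Matrix (Fin n) (Fin n) ℝ} {w : Fin n → ℝ}
    {b : ℝ} (hA : ∀ i j, 0 ≤ A i j) (hw : ∀ i, 0 < w i) (hAw : ∀ i, (A *ᵥ w) i ≤ b * w i)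
    (hb : 0 ≤ b) : specRadR A ≤ b :=
  Real.sSup_le (fun _ ⟨_, hμ, hx⟩ => hx ▸ Matrix.norm_le_of_mulVec_le_smul hA hw hAw hμ) hb

section Digraph

variable {n : ℕ} (E : Fin n → Fin n → Prop) [DecidableRel E]

theorem Qmat_apply_nonneg (i j : Fin n) : 0 ≤ Qmat E i j := by
  simp only [Qmat, Matrix.add_apply, diagonal_apply, adjM]
  positivity

theorem Qmat_mulVec_apply (w : Fin n → ℝ) (i : Fin n) :
    (Qmat E *ᵥ w) i = outdeg E i * w i + ∑ j ∈ univ.filter (E i ·), w j := by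
  rw [Qmat, add_mulVec, Pi.add_apply, mulVec_diagonal, sum_filter]
  simp [adjM, mulVec, dotProduct]

theorem outdeg_mul_m2 (i : Fin n) :
    outdeg E i * m2 E i = ∑ k ∈ univ.filter (E i ·), (outdeg E k : ℝ) := by
  rcases eq_or_ne (outdeg E i : ℝ) 0 with h | h
  · rw [h, zero_mul]
    rw [Nat.cast_eq_zero, outdeg, card_eq_zero] at h
    rw [h, sum_empty]
  · exact mul_div_cancel₀ _ h

theorem outdeg_mul_add_m2 (i : Fin n) :
    outdeg E i * (outdeg E i + m2 E i) =
      ∑ k ∈ univ.filter (E i ·), ((outdeg E i : ℝ) + outdeg E k) := by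
  rw [sum_add_distrib, sum_const, mul_add, outdeg_mul_m2, nsmul_eq_mul]
  rfl

noncomputable def sqrtArcWeight (i : Fin n) : ℝ :=
  ∑ k ∈ univ.filter (E i ·), √((outdeg E i : ℝ) + outdeg E k)

noncomputable def arcBound (p : Fin n × Fin n) : ℝ :=
  ((outdeg E p.1 : ℝ) * Real.sqrt ((outdeg E p.1 : ℝ) + m2 E p.1) +
    (outdeg E p.2 : ℝ) * Real.sqrt ((outdeg E p.2 : ℝ) + m2 E p.2)) /
      Real.sqrt ((outdeg E p.1 : ℝ) + (outdeg E p.2 : ℝ))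

theorem sqrtArcWeight_pos {i : Fin n} (hi : 0 < outdeg E i) : 0 < sqrtArcWeight E i :=
  sum_pos (fun k _ => Real.sqrt_pos.mpr (by positivity)) (card_pos.mp hi)

theorem sqrtArcWeight_le (i : Fin n) :
    sqrtArcWeight E i ≤ outdeg E i * √(outdeg E i + m2 E i) :=
  calc sqrtArcWeight E i
      = ∑ k ∈ univ.filter (E i ·), √1 * √((outdeg E i : ℝ) + outdeg E k) := by
        simp [sqrtArcWeight]
    _ ≤ √(∑ k ∈ univ.filter (E i ·), 1) *
          √(∑ k ∈ univ.filter (E i ·), ((outdeg E i : ℝ) + outdeg E k)) :=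
        Real.sum_sqrt_mul_sqrt_le _ (fun _ => zero_le_one) (fun _ => by positivity)
    _ = √(outdeg E i * (outdeg E i * (outdeg E i + m2 E i))) := by
        rw [← outdeg_mul_add_m2, ← Real.sqrt_mul (by positivity)]
        simp [outdeg]
    _ = outdeg E i * √(outdeg E i + m2 E i) := by
        rw [← mul_assoc, Real.sqrt_mul (by positivity), Real.sqrt_mul_self (by positivity)]

theorem sqrtArcWeight_add_le_arcBound {i j : Fin n} (hij : E i j) :
    sqrtArcWeight E i + sqrtArcWeight E j ≤ arcBound E (i, j) * √(outdeg E i + outdeg E j) := by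
  have hi : 0 < outdeg E i := card_pos.mpr ⟨j, by simpa using hij⟩
  rw [arcBound, div_mul_cancel₀ _ (by positivity)]
  exact add_le_add (sqrtArcWeight_le E i) (sqrtArcWeight_le E j)

theorem Qmat_mulVec_sqrtArcWeight_le {b : ℝ} (hb : ∀ p ∈ arcs E, arcBound E p ≤ b) (i : Fin n) :
    (Qmat E *ᵥ sqrtArcWeight E) i ≤ b * sqrtArcWeight E i := by
  calc (Qmat E *ᵥ sqrtArcWeight E) i
      = ∑ j ∈ univ.filter (E i ·), (sqrtArcWeight E i + sqrtArcWeight E j) := by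
        rw [Qmat_mulVec_apply, sum_add_distrib, sum_const, nsmul_eq_mul]
        rfl
    _ ≤ ∑ j ∈ univ.filter (E i ·), b * √((outdeg E i : ℝ) + outdeg E j) := by
        refine sum_le_sum fun j hj => ?_
        have hij : E i j := (mem_filter.mp hj).2
        refine (sqrtArcWeight_add_le_arcBound E hij).trans ?_
        gcongr
        exact hb _ (by simpa [arcs] using hij)
    _ = b * sqrtArcWeight E i := by rw [sqrtArcWeight, mul_sum]

end Digraph

theorem stmt_11_general {n : ℕ} (E : Fin n → Fin n → Prop) [DecidableRel E]
    (hdeg : ∀ i, 0 < outdeg E i) (harcs : (arcs E).Nonempty) :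
    qG E ≤ (arcs E).sup' harcs (fun p =>
      ((outdeg E p.1 : ℝ) * Real.sqrt ((outdeg E p.1 : ℝ) + m2 E p.1) +
       (outdeg E p.2 : ℝ) * Real.sqrt ((outdeg E p.2 : ℝ) + m2 E p.2)) /
        Real.sqrt ((outdeg E p.1 : ℝ) + (outdeg E p.2 : ℝ))) := by
  have hb : ∀ p ∈ arcs E, arcBound E p ≤ (arcs E).sup' harcs (arcBound E) :=
    fun p hp => le_sup' (arcBound E) hp
  refine specRadR_le_of_mulVec_le_smul (Qmat_apply_nonneg E)
    (fun i => sqrtArcWeight_pos E (hdeg i)) (Qmat_mulVec_sqrtArcWeight_le E hb) ?_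
  obtain ⟨p, hp⟩ := harcs
  exact (le_sup' (arcBound E) hp).trans' (by unfold arcBound; positivity)

/-- `q(G) ≤ max over arcs of
(d_i⁺√(d_i⁺+m_i⁺)+d_j⁺√(d_j⁺+m_j⁺))/√(d_i⁺+d_j⁺)`. -/
theorem stmt_11 {n : ℕ} (E : Fin n → Fin n → Prop) [DecidableRel E]
    (hloop : ∀ i, ¬ E i i) (hdeg : ∀ i, 0 < outdeg E i) (harcs : (arcs E).Nonempty) :
    qG E ≤ (arcs E).sup' harcs (fun p =>
      ((outdeg E p.1 : ℝ) * Real.sqrt ((outdeg E p.1 : ℝ) + m2 E p.1) +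
       (outdeg E p.2 : ℝ) * Real.sqrt ((outdeg E p.2 : ℝ) + m2 E p.2)) /
        Real.sqrt ((outdeg E p.1 : ℝ) + (outdeg E p.2 : ℝ))) :=
  stmt_11_general E hdeg harcs
end

section
/- Let K↔_{1,n−1} be the digraph on n ≥ 2 vertices obtained from the star K_{1,n−1} by replacing each edge with two oppositely directed arcs. Then q(K↔_{1,n−1}) = n. -/
open Matrix Finset

/-- The arcs of the bidirected star on `n` vertices with center the vertex `0`. -/
def starE (n : ℕ) (i j : Fin n) : Prop :=
  (i.val = 0 ∧ j.val ≠ 0) ∨ (i.val ≠ 0 ∧ j.val = 0)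

instance (n : ℕ) : DecidableRel (starE n) := fun i j => by
  unfold starE; infer_instance

/-!
Let `Q` be the signless Laplacian of the star with center `0`. An eigenvector `x` for `μ`
satisfies `μ x₀ = (n - 1) x₀ + S` and `μ xᵢ = xᵢ + x₀` at every leaf, where `S` is the sum
of the leaf entries. Summing the leaf equations gives `μ S = S + (n - 1) x₀`, and eliminating
`S` leaves `μ (μ - n) x₀ = 0`; if `x₀ = 0` the leaf equations force `μ = 1`. So every
eigenvalue is `0`, `1` or `n`, and `n` is attained by the eigenvector `(n - 1, 1, …, 1)`.
-/

lemma mem_spectrum_iff_exists_mulVec_eq_smul {K ι : Type*} [Field K] [Fintype ι] [DecidableEq ι]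
    {M : Matrix ι ι K} {μ : K} :
    μ ∈ spectrum K M ↔ ∃ v ≠ 0, M *ᵥ v = μ • v := by
  rw [← spectrum_toLin', ← Module.End.hasEigenvalue_iff_mem_spectrum,
    Module.End.hasEigenvalue_iff]
  simp only [Submodule.ne_bot_iff, Module.End.mem_eigenspace_iff, toLin'_apply]
  tauto

lemma specRad_eq_norm {n : ℕ} {M : Matrix (Fin n) (Fin n) ℂ} {μ : ℂ} (hμ : μ ∈ spectrum ℂ M)
    (hle : ∀ ν ∈ spectrum ℂ M, ‖ν‖ ≤ ‖μ‖) : specRad M = ‖μ‖ :=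
  IsGreatest.csSup_eq ⟨⟨μ, hμ, rfl⟩, by rintro _ ⟨ν, hν, rfl⟩; exact hle ν hν⟩

lemma Qmat_map_mulVec_apply {n : ℕ} (E : Fin n → Fin n → Prop) [DecidableRel E]
    (x : Fin n → ℂ) (i : Fin n) :
    ((Qmat E).map Complex.ofReal *ᵥ x) i =
      outdeg E i * x i + ∑ j ∈ univ.filter (E i), x j := by
  simp [mulVec, dotProduct, Qmat, adjM, diagonal, add_mul, sum_add_distrib, sum_filter,
    apply_ite Complex.ofReal, ite_mul]

namespace starE

variable {n : ℕ} [NeZero n]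

lemma zero_left_iff {j : Fin n} : starE n 0 j ↔ j ≠ 0 := by
  simp [starE]

lemma left_iff_of_ne_zero {i j : Fin n} (hi : i ≠ 0) : starE n i j ↔ j = 0 := by
  simp [starE, hi]

lemma filter_zero_eq : univ.filter (starE n 0) = univ.erase 0 := by
  ext j
  simp [zero_left_iff]

lemma filter_eq_of_ne_zero {i : Fin n} (hi : i ≠ 0) : univ.filter (starE n i) = {0} := by
  ext j
  simp [left_iff_of_ne_zero hi]

lemma outdeg_zero : (outdeg (starE n) 0 : ℂ) = n - 1 := by
  rw [outdeg, filter_zero_eq, card_erase_of_mem (mem_univ _), card_univ, Fintype.card_fin,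
    Nat.cast_pred (NeZero.pos n)]

lemma outdeg_of_ne_zero {i : Fin n} (hi : i ≠ 0) : outdeg (starE n) i = 1 := by
  rw [outdeg, filter_eq_of_ne_zero hi, card_singleton]

end starE

noncomputable def starQ (n : ℕ) : Matrix (Fin n) (Fin n) ℂ :=
  (Qmat (starE n)).map Complex.ofReal

namespace starQ

variable {n : ℕ} [NeZero n]

lemma mulVec_zero (x : Fin n → ℂ) :
    (starQ n *ᵥ x) 0 = (n - 1) * x 0 + ∑ j ∈ univ.erase 0, x j := by
  rw [starQ, Qmat_map_mulVec_apply, starE.outdeg_zero, starE.filter_zero_eq]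

lemma mulVec_of_ne_zero (x : Fin n → ℂ) {i : Fin n} (hi : i ≠ 0) :
    (starQ n *ᵥ x) i = x i + x 0 := by
  rw [starQ, Qmat_map_mulVec_apply, starE.outdeg_of_ne_zero hi, starE.filter_eq_of_ne_zero hi]
  simp

lemma eq_zero_or_one_or_n_of_mulVec_eq_smul {μ : ℂ} {x : Fin n → ℂ} (hx : x ≠ 0)
    (h : starQ n *ᵥ x = μ • x) : μ = 0 ∨ μ = 1 ∨ μ = n := by
  have hleaf : ∀ i ≠ 0, μ * x i = x i + x 0 := fun i hi => by
    simpa [mulVec_of_ne_zero x hi] using (congrFun h i).symm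
  have hcenter : μ * x 0 = (n - 1) * x 0 + ∑ j ∈ univ.erase 0, x j := by
    simpa [mulVec_zero] using (congrFun h 0).symm
  have hleaves : μ * ∑ j ∈ univ.erase 0, x j = ∑ j ∈ univ.erase 0, x j + (n - 1) * x 0 := by
    rw [mul_sum, sum_congr rfl fun i hi => hleaf i (ne_of_mem_erase hi), sum_add_distrib,
      sum_const, card_erase_of_mem (mem_univ _), card_univ, Fintype.card_fin, nsmul_eq_mul,
      Nat.cast_pred (NeZero.pos n)]
  by_cases h0 : x 0 = 0
  · obtain ⟨i, hi⟩ := Function.ne_iff.1 hx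
    have hi0 : i ≠ 0 := by rintro rfl; exact hi h0
    have : μ * x i = 1 * x i := by simpa [h0] using hleaf i hi0
    exact Or.inr (Or.inl (mul_right_cancel₀ hi this))
  · have : x 0 * (μ * (μ - n)) = 0 := by linear_combination (μ - 1) * hcenter + hleaves
    rcases mul_eq_zero.1 ((mul_eq_zero.1 this).resolve_left h0) with hμ | hμ
    · exact Or.inl hμ
    · exact Or.inr (Or.inr (sub_eq_zero.1 hμ))

lemma spectrum_subset : spectrum ℂ (starQ n) ⊆ {0, 1, (n : ℂ)} := fun μ hμ => by
  obtain ⟨x, hx, h⟩ := mem_spectrum_iff_exists_mulVec_eq_smul.1 hμ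
  exact eq_zero_or_one_or_n_of_mulVec_eq_smul hx h

lemma mulVec_eigenvector :
    starQ n *ᵥ (fun i => if i = 0 then (n - 1 : ℂ) else 1) =
      (n : ℂ) • fun i => if i = 0 then (n - 1 : ℂ) else 1 := by
  ext i
  by_cases hi : i = 0
  · subst hi
    rw [mulVec_zero, sum_congr rfl fun j hj => if_neg (ne_of_mem_erase hj)]
    simp [card_erase_of_mem, Nat.cast_pred (NeZero.pos n)]
    ring
  · simp [mulVec_of_ne_zero _ hi, hi]

end starQ

lemma starQ.natCast_mem_spectrum {n : ℕ} (hn : 2 ≤ n) : (n : ℂ) ∈ spectrum ℂ (starQ n) := by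
  have : NeZero n := ⟨by omega⟩
  refine mem_spectrum_iff_exists_mulVec_eq_smul.2 ⟨_, fun h => ?_, starQ.mulVec_eigenvector⟩
  have := congrFun h ⟨1, hn⟩
  simp [Fin.ext_iff] at this

/-- `q(K↔_{1,n−1}) = n`. -/
theorem stmt_15 (n : ℕ) (hn : 2 ≤ n) : qG (starE n) = (n : ℝ) := by
  have : NeZero n := ⟨by omega⟩
  have hle : ∀ ν ∈ spectrum ℂ (starQ n), ‖ν‖ ≤ ‖(n : ℂ)‖ := by
    intro ν hν
    rcases starQ.spectrum_subset hν with rfl | rfl | rfl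
    · simp
    · simp
      omega
    · rfl
  exact (specRad_eq_norm (starQ.natCast_mem_spectrum hn) hle).trans (Complex.norm_natCast n)
end

section
/- Let G be a strongly connected digraph with n vertices, m arcs, minimum outdegree δ⁺, and let u be a vertex with outdegree d_u^+ ≥ 2. Then the average 2-outdegree satisfies m_u^+ ≤ (m − (n−1)δ⁺)/d_u^+ + δ⁺ − 1. -/
open Matrix Finset

theorem Finset.add_sum_add_card_compl_mul_le_sum {ι : Type*} [Fintype ι] [DecidableEq ι]
    (f : ι → ℝ) {δ : ℝ} (hδ : ∀ i, δ ≤ f i) {a : ι} {s : Finset ι} (ha : a ∉ s) :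
    f a + ∑ i ∈ s, f i + ((Fintype.card ι : ℝ) - s.card - 1) * δ ≤ ∑ i, f i := by
  have hcard : (((insert a s)ᶜ).card : ℝ) = Fintype.card ι - s.card - 1 := by
    rw [card_compl, Nat.cast_sub (card_le_univ _), card_insert_of_notMem ha]
    push_cast
    ring
  have hcompl : ((insert a s)ᶜ.card : ℝ) * δ ≤ ∑ i ∈ (insert a s)ᶜ, f i := by
    simpa using card_nsmul_le_sum _ f δ (fun i _ => hδ i)
  rw [← sum_add_sum_compl (insert a s), sum_insert ha, ← hcard]
  linarith

theorem outdeg_add_sum_outdeg_succ_add_mul_le_sum_outdeg {n : ℕ} (E : Fin n → Fin n → Prop) [DecidableRel E]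
    (hloop : ∀ i, ¬ E i i) {δ : ℕ} (hδ : ∀ i, δ ≤ outdeg E i) (u : Fin n) :
    (outdeg E u : ℝ) + ∑ v ∈ univ.filter (E u ·), (outdeg E v : ℝ)
        + ((n : ℝ) - outdeg E u - 1) * δ ≤ ∑ i, (outdeg E i : ℝ) := by
  simpa [outdeg] using add_sum_add_card_compl_mul_le_sum (fun i => (outdeg E i : ℝ))
    (fun i => by exact_mod_cast hδ i) (a := u) (s := univ.filter (E u ·)) (by simp [hloop u])

theorem stmt_17_general {n : ℕ} (E : Fin n → Fin n → Prop) [DecidableRel E]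
    (hloop : ∀ i, ¬ E i i)
    (m δ : ℕ) (hm : m = ∑ i, outdeg E i)
    (hδ : IsLeast (Set.range (outdeg E)) δ)
    (u : Fin n) (hu : 2 ≤ outdeg E u) :
    m2 E u ≤ ((m : ℝ) - ((n : ℝ) - 1) * δ) / (outdeg E u : ℝ) + (δ : ℝ) - 1 := by
  have hd : (0 : ℝ) < outdeg E u := by exact_mod_cast (by omega : 0 < outdeg E u)
  have key := outdeg_add_sum_outdeg_succ_add_mul_le_sum_outdeg E hloop (fun i => hδ.2 (Set.mem_range_self i)) u
  rw [m2, div_add' _ _ _ hd.ne', div_sub' hd.ne', div_le_div_iff_of_pos_right hd, hm]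
  push_cast
  linarith

/-- for a vertex `u` with `d_u⁺ ≥ 2`,
`m_u⁺ ≤ (m − (n−1)δ⁺)/d_u⁺ + δ⁺ − 1`. -/
theorem stmt_17 {n : ℕ} (E : Fin n → Fin n → Prop) [DecidableRel E]
    (hloop : ∀ i, ¬ E i i) (hsc : StrongConn E)
    (m δ : ℕ) (hm : m = ∑ i, outdeg E i)
    (hδ : IsLeast (Set.range (outdeg E)) δ)
    (u : Fin n) (hu : 2 ≤ outdeg E u) :
    m2 E u ≤ ((m : ℝ) - ((n : ℝ) - 1) * δ) / (outdeg E u : ℝ) + (δ : ℝ) - 1 :=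
  stmt_17_general E hloop m δ hm hδ u hu
end
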